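/- arXiv:2411.06636 — 5 statements merged into one kernel-verified Lean document; each statement's English description precedes it below -/
import Mathlib

section
/- Let C be a category with pullbacks and suppose the square with sides p : W ⟶ X, q : W ⟶ Y, f : X ⟶ Z, g : Y ⟶ Z (so p ≫ f = q ≫ g) is a pullback square. Then the canonical Beck–Chevalley natural transformation Over.pullback q ⋙ Over.map p ⟶ Over.map g ⋙ Over.pullback f (of functors Over Y ⥤ Over X), obtained as the mate of the natural isomorphism Over.map p ⋙ Over.map f ≅ Over.map q ⋙ Over.map g with respect to the adjunctions Over.map p ⊣ Over.pullback p and Over.map g ⊣ Over.pullback g, is a natural isomorphism. -/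
/-!
At `A : Over Y`, the mate is the comparison map `A ×_Y W ⟶ A ×_Z X` with legs `fst` and
`snd ≫ p`: the first leg is read off from the counit of `Over.map f ⊣ Over.pullback f`, the second
is the fact that the component is a morphism over `X`. Pasting the pullback square of `A` along `q`
with the given one shows that `A ×_Y W` is itself a pullback of `A ⟶ Z` along `f`, so the
comparison map is an isomorphism, and `Over.forget X` reflects isomorphisms.
-/

open CategoryTheory CategoryTheory.Limits

namespace CategoryTheory.Over

variable {C : Type*} [Category C] {W X Y Z : C} (p : W ⟶ X) (q : W ⟶ Y) (f : X ⟶ Z) (g : Y ⟶ Z)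
  [HasPullbacksAlong q] [HasPullbacksAlong f] (comm : p ≫ f = q ≫ g)

noncomputable def beckChevalley : pullback q ⋙ map p ⟶ map g ⋙ pullback f :=
  mateEquiv (mapPullbackAdj q) (mapPullbackAdj f)
    ((mapComp p f).symm ≪≫ mapCongr _ _ comm ≪≫ mapComp q g).hom

@[simp]
theorem beckChevalley_app_left_fst (A : Over Y) :
    ((beckChevalley p q f g comm).app A).left ≫ pullback.fst (A.hom ≫ g) f =
      pullback.fst A.hom q := by
  have h := congrArg CommaMorphism.left (mateEquiv_counit (mapPullbackAdj q) (mapPullbackAdj f)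
    ((mapComp p f).symm ≪≫ mapCongr _ _ comm ≪≫ mapComp q g).hom A)
  simp only [comp_left, map_map_left, mapPullbackAdj_counit_app, homMk_left] at h
  exact h.trans (by simp)

@[simp]
theorem beckChevalley_app_left_snd (A : Over Y) :
    ((beckChevalley p q f g comm).app A).left ≫ pullback.snd (A.hom ≫ g) f =
      pullback.snd A.hom q ≫ p := by
  simpa using Over.w ((beckChevalley p q f g comm).app A)

theorem isIso_beckChevalley_app_left (hpb : IsPullback p q f g) (A : Over Y) :
    IsIso ((beckChevalley p q f g comm).app A).left := by
  have hpaste : IsPullback (pullback.fst A.hom q) (pullback.snd A.hom q ≫ p) (A.hom ≫ g) f :=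
    ((IsPullback.of_hasPullback A.hom q).flip.paste_horiz hpb).flip
  have : ((beckChevalley p q f g comm).app A).left = hpaste.isoPullback.hom := by
    apply pullback.hom_ext <;> simp
  rw [this]
  infer_instance

theorem isIso_beckChevalley (hpb : IsPullback p q f g) : IsIso (beckChevalley p q f g comm) := by
  have (A : Over Y) : IsIso ((beckChevalley p q f g comm).app A) := by
    have : IsIso ((forget X).map ((beckChevalley p q f g comm).app A)) :=
      isIso_beckChevalley_app_left p q f g comm hpb A
    exact isIso_of_reflects_iso _ (forget X)
  exact NatIso.isIso_of_isIso_app _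

end CategoryTheory.Over

/-- For a pullback square `p ≫ f = q ≫ g` in a category with pullbacks, the
Beck–Chevalley natural transformation
`Over.pullback q ⋙ Over.map p ⟶ Over.map g ⋙ Over.pullback f`, obtained as the mate of
the natural isomorphism `Over.map p ⋙ Over.map f ≅ Over.map q ⋙ Over.map g` with respect
to the adjunctions between `Over.map` and `Over.pullback`, is a natural isomorphism. -/
theorem over_map_pullback_beckChevalley_isIso
    {C : Type*} [Category C] [HasPullbacks C]
    {W X Y Z : C} (p : W ⟶ X) (q : W ⟶ Y) (f : X ⟶ Z) (g : Y ⟶ Z)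
    (comm : p ≫ f = q ≫ g) (hpb : IsPullback p q f g) :
    IsIso ((mateEquiv (Over.mapPullbackAdj q) (Over.mapPullbackAdj f))
      ((Over.mapComp p f).symm ≪≫ Over.mapCongr _ _ comm ≪≫ Over.mapComp q g).hom) :=
  Over.isIso_beckChevalley p q f g comm hpb
end

section
/- Let C be a locally cartesian closed category, i.e., C has finite limits and for every morphism g the base-change functor Over.pullback g has a right adjoint (the pushforward, or dependent product, along g). For every pullback square with sides p : W ⟶ X, q : W ⟶ Y, f : X ⟶ Z, g : Y ⟶ Z (so p ≫ f = q ≫ g), the canonical natural transformation pushforward g ⋙ Over.pullback f ⟶ Over.pullback q ⋙ pushforward p (of functors Over Y ⥤ Over X), obtained as the mate of the Beck–Chevalley isomorphism for the left adjoints with respect to the adjunctions Over.pullback g ⊣ pushforward g and Over.pullback p ⊣ pushforward p, is a natural isomorphism. -/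
/-!
For the adjunctions `Over.map ⊣ Over.pullback`, the Beck–Chevalley transformation
`pullback p ⋙ map q ⟶ map f ⋙ pullback g` of the square is, on `A ⟶ X`, the comparison map
`W ×_X A ⟶ A ×_Z Y`; it is invertible by pullback pasting. The Beck–Chevalley isomorphism of the
pullback functors is its mate, so the transformation of pushforwards is an iterated mate of an
isomorphism. Iterated mates are conjugates, and conjugates of isomorphisms are isomorphisms.
-/

open CategoryTheory CategoryTheory.Limits

namespace CategoryTheory

theorem isIso_iterated_mateEquiv {A B C D : Type*} [Category A] [Category B] [Category C]
    [Category D] {F₁ : A ⥤ C} {U₁ : C ⥤ A} {F₂ : B ⥤ D} {U₂ : D ⥤ B}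
    {L₁ : A ⥤ B} {R₁ : B ⥤ A} {L₂ : C ⥤ D} {R₂ : D ⥤ C}
    (adj₁ : L₁ ⊣ R₁) (adj₂ : L₂ ⊣ R₂) (adj₃ : F₁ ⊣ U₁) (adj₄ : F₂ ⊣ U₂)
    (α : TwoSquare F₁ L₁ L₂ F₂) [IsIso α] :
    IsIso (mateEquiv adj₄ adj₃ (mateEquiv adj₁ adj₂ α)) := by
  change IsIso (TwoSquare.natTrans _)
  rw [iterated_mateEquiv_conjugateEquiv]
  exact conjugateEquiv_iso _ _ α

namespace Over

variable {C : Type*} [Category C] {W X Y Z : C} {p : W ⟶ X} {q : W ⟶ Y} {f : X ⟶ Z} {g : Y ⟶ Z}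

def mapSquare (w : p ≫ f = q ≫ g) : TwoSquare (map q) (map p) (map g) (map f) :=
  (mapComp q g).inv ≫ (mapCongr _ _ w.symm).hom ≫ (mapComp p f).hom

section

variable [HasPullbacksAlong p] [HasPullbacksAlong g]

theorem mateEquiv_mapSquare_app_left (w : p ≫ f = q ≫ g) (x : Over X) :
    ((mateEquiv (mapPullbackAdj p) (mapPullbackAdj g) (mapSquare w)).app x).left =
      pullback.lift (pullback.fst x.hom p) (pullback.snd x.hom p ≫ q)
        (by simp [pullback.condition_assoc, w]) := by
  apply pullback.hom_ext
  · rw [pullback.lift_fst]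
    simpa [mapSquare] using congr_arg CommaMorphism.left
      (mateEquiv_counit (mapPullbackAdj p) (mapPullbackAdj g) (mapSquare w) x)
  · rw [pullback.lift_snd]
    exact Over.w ((mateEquiv (mapPullbackAdj p) (mapPullbackAdj g) (mapSquare w)).app x)

theorem isIso_mateEquiv_mapSquare (hpb : IsPullback p q f g) :
    IsIso (mateEquiv (mapPullbackAdj p) (mapPullbackAdj g) (mapSquare hpb.w)) := by
  set μ := mateEquiv (mapPullbackAdj p) (mapPullbackAdj g) (mapSquare hpb.w)
  suffices ∀ x, IsIso (μ.app x) from NatIso.isIso_of_isIso_app _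
  intro x
  have hpaste : IsPullback (pullback.fst x.hom p) (pullback.snd x.hom p ≫ q) (x.hom ≫ f) g :=
    ((IsPullback.of_hasPullback x.hom p).flip.paste_horiz hpb.flip).flip
  have hleft : (μ.app x).left = hpaste.isoPullback.hom :=
    (mateEquiv_mapSquare_app_left hpb.w x).trans <| pullback.hom_ext
      (by rw [pullback.lift_fst]; exact hpaste.isoPullback_hom_fst.symm)
      (by rw [pullback.lift_snd]; exact hpaste.isoPullback_hom_snd.symm)
  have : IsIso ((forget Y).map (μ.app x)) := by
    rw [forget_map, hleft]
    exact Iso.isIso_hom _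
  exact isIso_of_reflects_iso _ (forget Y)

end

variable [HasPullbacks C]

theorem eqToHom_pullback_eq_conjugateEquiv {u v : X ⟶ Z} (h : u = v) :
    (eqToHom (congrArg (fun k => pullback k) h) : pullback u ⟶ pullback v) =
      conjugateEquiv (mapPullbackAdj u) (mapPullbackAdj v) (mapCongr v u h.symm).hom := by
  subst h
  simp [conjugateEquiv_id]

noncomputable def pullbackSquareIso (w : p ≫ f = q ≫ g) :
    pullback f ⋙ pullback p ≅ pullback g ⋙ pullback q :=
  (pullbackComp p f).symm ≪≫ eqToIso (congrArg (fun h => pullback h) w) ≪≫ pullbackComp q g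

theorem pullbackSquareIso_hom_eq_mateEquiv (w : p ≫ f = q ≫ g) :
    (pullbackSquareIso w).hom = (mateEquiv (mapPullbackAdj f) (mapPullbackAdj q)
      (mateEquiv (mapPullbackAdj p) (mapPullbackAdj g) (mapSquare w))).natTrans := by
  rw [iterated_mateEquiv_conjugateEquiv]
  simp only [pullbackSquareIso, pullbackComp, Iso.trans_hom, Iso.symm_hom, eqToIso.hom,
    conjugateIsoEquiv_apply_inv, conjugateIsoEquiv_apply_hom, Iso.symm_inv]
  rw [eqToHom_pullback_eq_conjugateEquiv w, conjugateEquiv_comp, conjugateEquiv_comp,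
    Category.assoc]
  rfl

end Over

end CategoryTheory

/-- Let `C` be locally cartesian closed: it has finite limits and every base-change functor
`Over.pullback g` has a right adjoint `pushforward g`.  For every pullback square
`p ≫ f = q ≫ g`, the mate of the Beck–Chevalley isomorphism
`Over.pullback f ⋙ Over.pullback p ≅ Over.pullback g ⋙ Over.pullback q` for the left
adjoints, taken with respect to the adjunctions `Over.pullback g ⊣ pushforward g` and
`Over.pullback p ⊣ pushforward p`, is a natural isomorphism
`pushforward g ⋙ Over.pullback f ⟶ Over.pullback q ⋙ pushforward p`. -/
theorem pushforward_beckChevalley_isIso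
    {C : Type*} [Category C] [HasFiniteLimits C]
    (pushforward : ∀ {x y : C}, (x ⟶ y) → (Over x ⥤ Over y))
    (adj : ∀ {x y : C} (f : x ⟶ y), Over.pullback f ⊣ pushforward f)
    {W X Y Z : C} (p : W ⟶ X) (q : W ⟶ Y) (f : X ⟶ Z) (g : Y ⟶ Z)
    (hpb : IsPullback p q f g) :
    IsIso ((mateEquiv (adj g) (adj p))
      ((Over.pullbackComp p f).symm ≪≫
        eqToIso (congrArg (fun h => Over.pullback h) hpb.w) ≪≫
        Over.pullbackComp q g).hom) := by
  change IsIso (mateEquiv (adj g) (adj p) (Over.pullbackSquareIso hpb.w).hom)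
  rw [Over.pullbackSquareIso_hom_eq_mateEquiv]
  have := Over.isIso_mateEquiv_mapSquare hpb
  exact isIso_iterated_mateEquiv _ _ _ _ _
end

section
/- Let C be a category with finite limits that has a subobject classifier. Then for every object x : C, the slice category Over x has a subobject classifier (given by the projection from the product of x with the subobject classifier of C onto x). -/
open CategoryTheory CategoryTheory.Limits

/-- A subobject classifier in a category with a terminal object: an object `Ω` together
with a morphism `truth : ⊤_ C ⟶ Ω` such that every monomorphism `m : a ⟶ b` is the
pullback of `truth` along a unique characteristic morphism `χ : b ⟶ Ω`. -/
structure Classifier (C : Type*) [Category C] [HasTerminal C] where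
  /-- The object of truth values. -/
  Ω : C
  /-- The truth morphism. -/
  truth : ⊤_ C ⟶ Ω
  /-- Every mono is the pullback of `truth` along a unique characteristic morphism. -/
  classifies : ∀ {a b : C} (m : a ⟶ b) [Mono m],
    ∃! χ : b ⟶ Ω, IsPullback (terminal.from a) m truth χ

/-! Morphisms `b ⟶ Over.mk (prod.fst : x ⨯ Ω ⟶ x)` in `Over x` are the same as morphisms
`b.left ⟶ Ω` in `C`, and the truth value of `Over x` is chosen so that pulling back `truth`
along `prod.snd : x ⨯ Ω ⟶ Ω` gives the terminal object of `Over x`. Pasting with that square, a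
square in `Over x` exhibits `m` as the pullback of the new truth value along `φ` iff its image in
`C` exhibits `m.left` as the pullback of `truth` along the transpose of `φ`; so characteristic
maps in `Over x` correspond to characteristic maps in `C`. -/

namespace CategoryTheory

variable {C : Type*} [Category C]

lemma Limits.isPullback_prodLift_snd [HasTerminal C] [HasBinaryProducts C] {Y x Z : C}
    (e : Y ⟶ x) [IsIso e] (t : ⊤_ C ⟶ Z) :
    IsPullback (terminal.from Y) (prod.lift e (terminal.from Y ≫ t)) t prod.snd := by
  have comm : terminal.from Y ≫ t = prod.lift e (terminal.from Y ≫ t) ≫ prod.snd :=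
    (prod.lift_snd _ _).symm
  refine IsPullback.of_isLimit (PullbackCone.IsLimit.mk comm (fun s => s.snd ≫ prod.fst ≫ inv e)
    (fun _ => Subsingleton.elim _ _) (fun s => prod.hom_ext ?_ ?_) (fun s m _ hm => ?_))
  · simp [prod.lift_fst]
  · have h : (s.snd ≫ prod.fst ≫ inv e) ≫ terminal.from Y = s.fst := Subsingleton.elim _ _
    simp only [Category.assoc, prod.lift_snd]
    rw [← s.condition, ← h]
    simp only [Category.assoc]
  · rw [← Category.assoc, IsIso.eq_comp_inv, ← hm, Category.assoc, prod.lift_fst]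

namespace Over

instance isIso_terminal_hom (x : C) : IsIso (⊤_ (Over x)).hom := by
  let e := terminalIsTerminal.uniqueUpToIso (mkIdTerminal (X := x))
  have : IsIso e.hom.left := inferInstanceAs (IsIso ((forget x).map e.hom))
  rw [← Over.w e.hom]
  simp only [mk_left, mk_hom, Category.comp_id]
  infer_instance

@[simps]
noncomputable def homToProdFstEquiv [HasBinaryProducts C] {x : C} (b : Over x) (Y : C) :
    (b ⟶ mk (prod.fst : x ⨯ Y ⟶ x)) ≃ (b.left ⟶ Y) where
  toFun φ := φ.left ≫ prod.snd
  invFun g := homMk (prod.lift b.hom g) (prod.lift_fst _ _)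
  left_inv φ := by
    ext
    apply prod.hom_ext
    · simpa [prod.lift_fst] using (Over.w φ).symm
    · simp [prod.lift_snd]
  right_inv g := prod.lift_snd _ _

end Over

end CategoryTheory

namespace Classifier

variable {C : Type*} [Category C] [HasTerminal C] [HasBinaryProducts C]
  (c : _root_.Classifier C) (x : C)

noncomputable def overTruth : ⊤_ (Over x) ⟶ Over.mk (prod.fst : x ⨯ c.Ω ⟶ x) :=
  (Over.homToProdFstEquiv _ _).symm (terminal.from _ ≫ c.truth)

lemma isPullback_overTruth_left :
    IsPullback (terminal.from (⊤_ (Over x)).left) (c.overTruth x).left c.truth prod.snd :=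
  isPullback_prodLift_snd _ _

lemma isPullback_overTruth_iff {a b : Over x} (m : a ⟶ b) (φ : b ⟶ Over.mk prod.fst) :
    IsPullback (terminal.from a) m (c.overTruth x) φ ↔
      IsPullback (terminal.from a.left) m.left c.truth (Over.homToProdFstEquiv b c.Ω φ) := by
  rw [Over.homToProdFstEquiv_apply,
    Subsingleton.elim (terminal.from a.left) ((terminal.from a).left ≫ terminal.from _)]
  refine ⟨fun h => (h.map (Over.forget x)).paste_horiz (c.isPullback_overTruth_left x),
    fun h => ?_⟩
  have comm : terminal.from a ≫ c.overTruth x = m ≫ φ := by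
    apply (Over.homToProdFstEquiv a c.Ω).injective
    simpa [overTruth, prod.lift_snd] using h.w
  exact (h.of_right (congrArg CommaMorphism.left comm) (c.isPullback_overTruth_left x)).of_map
    (Over.forget x) comm

noncomputable def slice : _root_.Classifier (Over x) where
  Ω := Over.mk (prod.fst : x ⨯ c.Ω ⟶ x)
  truth := c.overTruth x
  classifies m _ := (Equiv.existsUnique_congr _ (c.isPullback_overTruth_iff x m)).2
    (c.classifies m.left)

end Classifier

/-- If a category `C` with finite limits has a subobject classifier, then every slice
category `Over x` has a subobject classifier, whose object of truth values is the
projection `x ⨯ Ω ⟶ x` from the product of `x` with the subobject classifier of `C`. -/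
theorem over_hasClassifier
    {C : Type*} [Category C] [HasFiniteLimits C] (c : _root_.Classifier C) (x : C) :
    ∃ cl : _root_.Classifier (Over x), cl.Ω = Over.mk (Limits.prod.fst : x ⨯ c.Ω ⟶ x) :=
  ⟨c.slice x, rfl⟩
end

section
/- Let C be a category with finite limits and binary coproducts such that for every morphism f : x ⟶ y the base-change functor Over.pullback f : Over y ⥤ Over x preserves binary coproducts. Then for every object x : C, the slice category Over x has binary coproducts and the forgetful functor Over x ⥤ C preserves them; moreover, for every morphism g in Over x, the base-change functor along g in Over x preserves binary coproducts. -/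
/-!
Binary coproducts in `Over x` are created by `Over.forget x`. For base
change along `g : a ⟶ b` in `Over x`, the iterated slice equivalences `Over a ≌ Over a.left`
identify `Over.pullback g` with `Over.pullback g.left`: the left adjoints `Over.map g` and
`Over.map g.left` correspond on the nose, hence so do their right adjoints.
-/

open CategoryTheory CategoryTheory.Limits

namespace CategoryTheory.Over

variable {C : Type*} [Category C] [HasPullbacks C] {X : C} {a b : Over X}

noncomputable def iteratedSliceBackwardPullbackIso (g : a ⟶ b) :
    b.iteratedSliceBackward ⋙ pullback g ≅ pullback g.left ⋙ a.iteratedSliceBackward :=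
  conjugateIsoEquiv
    ((mapPullbackAdj g).comp b.iteratedSliceEquiv.toAdjunction)
    (a.iteratedSliceEquiv.toAdjunction.comp (mapPullbackAdj g.left))
    (iteratedSliceForwardNaturalityIso g)

noncomputable def pullbackIsoIteratedSlice (g : a ⟶ b) :
    pullback g ≅ b.iteratedSliceForward ⋙ pullback g.left ⋙ a.iteratedSliceBackward :=
  (Functor.leftUnitor _).symm ≪≫ Functor.isoWhiskerRight b.iteratedSliceEquiv.unitIso _ ≪≫
    Functor.associator _ _ _ ≪≫ Functor.isoWhiskerLeft _ (iteratedSliceBackwardPullbackIso g)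

lemma preservesColimitsOfShape_pullback {J : Type*} [Category J] (g : a ⟶ b)
    [PreservesColimitsOfShape J (pullback g.left)] :
    PreservesColimitsOfShape J (pullback g) := by
  have : b.iteratedSliceForward.IsEquivalence := b.iteratedSliceEquiv.isEquivalence_functor
  have : a.iteratedSliceBackward.IsEquivalence := a.iteratedSliceEquiv.isEquivalence_inverse
  exact preservesColimitsOfShape_of_natIso (pullbackIsoIteratedSlice g).symm

end CategoryTheory.Over

/-- Let `C` be a category with finite limits and binary coproducts such that every
base-change functor `Over.pullback f` preserves binary coproducts.  Then every slice
category `Over x` has binary coproducts, the forgetful functor `Over x ⥤ C` preserves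
them, and every base-change functor in `Over x` preserves binary coproducts. -/
theorem over_hasBinaryCoproducts
    {C : Type*} [Category C] [HasFiniteLimits C] [HasBinaryCoproducts C]
    (hpres : ∀ {x y : C} (f : x ⟶ y),
      PreservesColimitsOfShape (Discrete WalkingPair) (Over.pullback f))
    (x : C) :
    HasBinaryCoproducts (Over x) ∧
      PreservesColimitsOfShape (Discrete WalkingPair) (Over.forget x) ∧
      ∀ {a b : Over x} (g : a ⟶ b),
        PreservesColimitsOfShape (Discrete WalkingPair) (Over.pullback g) :=
  ⟨inferInstance, inferInstance, fun g =>
    have := hpres g.left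
    Over.preservesColimitsOfShape_pullback g⟩
end

section
/- Let B₁ and B₂ be bicategories, let F, G : B₁ ⥤ B₂ be pseudofunctors, and let τ : F ⟶ G be a strong natural transformation such that for every object x : B₁ the component τ_x : F x ⟶ G x is an equivalence in B₂ (i.e., part of an adjoint equivalence). Then τ is an equivalence in the bicategory of pseudofunctors: there exists a strong natural transformation σ : G ⟶ F together with invertible modifications between τ ≫ σ and the identity transformation of F, and between σ ≫ τ and the identity transformation of G. -/
/-!
Choose for every `x` an adjunction `i x ⊣ τ.app x` with invertible unit and counit (the given
adjoint equivalence, read backwards). The naturality 2-cell of the inverse `σ` at `f` is the mate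
of `(τ.naturality f).inv`, invertible because the unit and counit are. The mate correspondence
commutes with whiskering, identity squares and pasting, so the coherence axioms of `τ` transfer
to `σ`; and since mates are compatible with units and counits, the counits and the inverse units
assemble into invertible modifications `τ ≫ σ ⟶ 𝟙 F` and `σ ≫ τ ⟶ 𝟙 G`.
-/

open CategoryTheory

open scoped Pseudofunctor.StrongTrans

open Bicategory

namespace CategoryTheory.Bicategory

variable {B : Type*} [Bicategory B]

def Equivalence.adjunctionInvHom {a b : B} (e : a ≌ b) : e.inv ⊣ e.hom where
  unit := e.counit.inv
  counit := e.unit.inv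
  left_triangle := by rw [← rightZigzagIso_inv, e.right_triangle]; simp
  right_triangle := by rw [← leftZigzagIso_inv, e.left_triangle]; simp

section Mates

variable {c d e f : B} {g : c ⟶ e} {h : d ⟶ f} {l₁ : c ⟶ d} {r₁ : d ⟶ c} {l₂ : e ⟶ f}
  {r₂ : f ⟶ e} (adj₁ : l₁ ⊣ r₁) (adj₂ : l₂ ⊣ r₂)

lemma mateEquiv_whiskerRight_comp {g' : c ⟶ e} (γ : g' ⟶ g) (α : g ≫ l₂ ⟶ l₁ ≫ h) :
    mateEquiv adj₁ adj₂ (γ ▷ l₂ ≫ α) = r₁ ◁ γ ≫ mateEquiv adj₁ adj₂ α := by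
  simp only [mateEquiv_apply']
  calc _ = 𝟙 _ ⊗≫ r₁ ◁ (g' ◁ adj₂.unit ≫ γ ▷ (l₂ ≫ r₂)) ⊗≫ r₁ ◁ α ▷ r₂ ⊗≫
          adj₁.counit ▷ h ▷ r₂ ⊗≫ 𝟙 _ := by
        bicategory
    _ = _ := by rw [whisker_exchange]; bicategory

lemma mateEquiv_comp_whiskerLeft {h' : d ⟶ f} (α : g ≫ l₂ ⟶ l₁ ≫ h) (δ : h ⟶ h') :
    mateEquiv adj₁ adj₂ (α ≫ l₁ ◁ δ) = mateEquiv adj₁ adj₂ α ≫ δ ▷ r₂ := by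
  simp only [mateEquiv_apply']
  calc _ = 𝟙 _ ⊗≫ r₁ ◁ g ◁ adj₂.unit ⊗≫ r₁ ◁ α ▷ r₂ ⊗≫
          ((r₁ ≫ l₁) ◁ δ ≫ adj₁.counit ▷ h') ▷ r₂ ⊗≫ 𝟙 _ := by
        bicategory
    _ = _ := by rw [whisker_exchange]; bicategory

lemma unit_comp_mateEquiv (α : g ≫ l₂ ⟶ l₁ ≫ h) :
    (λ_ g).inv ≫ adj₁.unit ▷ g ≫ (α_ _ _ _).hom ≫ l₁ ◁ mateEquiv adj₁ adj₂ α =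
      (ρ_ g).inv ≫ g ◁ adj₂.unit ≫ (α_ _ _ _).inv ≫ α ▷ r₂ ≫ (α_ _ _ _).hom := by
  simpa [Adjunction.homEquiv₁_symm_apply, Adjunction.homEquiv₂_apply] using
    (mateEquiv_eq_iff adj₁ adj₂ α _).1 rfl

lemma mateEquiv_comp_counit (α : g ≫ l₂ ⟶ l₁ ≫ h) :
    r₁ ◁ α ≫ (α_ _ _ _).inv ≫ adj₁.counit ▷ h ≫ (λ_ h).hom =
      (α_ _ _ _).inv ≫ mateEquiv adj₁ adj₂ α ▷ l₂ ≫ (α_ _ _ _).hom ≫ h ◁ adj₂.counit ≫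
        (ρ_ h).hom := by
  symm
  calc _ = 𝟙 _ ⊗≫ r₁ ◁ g ◁ adj₂.unit ▷ l₂ ⊗≫ r₁ ◁ α ▷ r₂ ▷ l₂ ⊗≫
          (adj₁.counit ▷ (h ≫ r₂ ≫ l₂) ≫ 𝟙 d ◁ h ◁ adj₂.counit) ⊗≫ 𝟙 _ := by
        rw [mateEquiv_apply']; bicategory
    _ = 𝟙 _ ⊗≫ r₁ ◁ g ◁ adj₂.unit ▷ l₂ ⊗≫ r₁ ◁ (α ▷ (r₂ ≫ l₂) ≫ (l₁ ≫ h) ◁ adj₂.counit) ⊗≫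
          adj₁.counit ▷ h ⊗≫ 𝟙 _ := by
        rw [← whisker_exchange]; bicategory
    _ = 𝟙 _ ⊗≫ r₁ ◁ g ◁ leftZigzag adj₂.unit adj₂.counit ⊗≫ r₁ ◁ α ⊗≫
          adj₁.counit ▷ h ⊗≫ 𝟙 _ := by
        rw [← whisker_exchange]; bicategory
    _ = _ := by rw [adj₂.left_triangle]; bicategory

instance isIso_mateEquiv_symm [IsIso adj₁.unit] [IsIso adj₂.counit] (β : r₁ ≫ g ⟶ h ≫ r₂)
    [IsIso β] : IsIso ((mateEquiv adj₁ adj₂).symm β) := by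
  simp only [mateEquiv_symm_apply, Adjunction.homEquiv₁_symm_apply,
    Adjunction.homEquiv₂_symm_apply]
  infer_instance

end Mates

end CategoryTheory.Bicategory

namespace CategoryTheory.Pseudofunctor.StrongTrans

variable {B₁ B₂ : Type*} [Bicategory B₁] [Bicategory B₂]
  {F G : Pseudofunctor B₁ B₂}

lemma naturality_inv_naturality (τ : F ⟶ G) {a b : B₁} {f g : a ⟶ b} (η : f ⟶ g) :
    τ.app a ◁ G.map₂ η ≫ (τ.naturality g).inv = (τ.naturality f).inv ≫ F.map₂ η ▷ τ.app b := by
  rw [← cancel_epi (τ.naturality f).hom, ← cancel_mono (τ.naturality g).hom]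
  simp

variable (τ : F ⟶ G) {i : ∀ x, G.obj x ⟶ F.obj x} (adj : ∀ x, i x ⊣ τ.app x)
  [∀ x, IsIso (adj x).unit] [∀ x, IsIso (adj x).counit]

noncomputable def leftAdjointTrans : G ⟶ F where
  app := i
  naturality {a b} f := asIso ((Bicategory.mateEquiv (adj a) (adj b)).symm (τ.naturality f).inv)
  naturality_naturality {a b} f g η := by
    apply (Bicategory.mateEquiv (adj a) (adj b)).injective
    simp [mateEquiv_whiskerRight_comp, mateEquiv_comp_whiskerLeft, naturality_inv_naturality]
  naturality_id a := by
    apply (Bicategory.mateEquiv (adj a) (adj a)).injective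
    simp [mateEquiv_whiskerRight_comp, mateEquiv_comp_whiskerLeft, naturality_id_inv]
  naturality_comp {a b c} f g := by
    apply (Bicategory.mateEquiv (adj a) (adj c)).injective
    change _ = Bicategory.mateEquiv _ _ ((G.mapComp f g).hom ▷ i c ≫ leftAdjointSquare.vcomp _ _)
    rw [mateEquiv_comp_whiskerLeft, mateEquiv_whiskerRight_comp,
      Bicategory.mateEquiv_vcomp _ (adj b)]
    simp [rightAdjointSquare.vcomp, naturality_comp_inv]

@[simp]
lemma leftAdjointTrans_app (x : B₁) : (leftAdjointTrans τ adj).app x = i x :=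
  rfl

lemma mateEquiv_leftAdjointTrans_naturality {a b : B₁} (f : a ⟶ b) :
    Bicategory.mateEquiv (adj a) (adj b) ((leftAdjointTrans τ adj).naturality f).hom =
      (τ.naturality f).inv :=
  Equiv.apply_symm_apply _ _

lemma leftAdjointTrans_counit_naturality {a b : B₁} (f : a ⟶ b) :
    F.map f ◁ (adj b).counit ≫ (ρ_ _).hom ≫ (λ_ _).inv =
      ((α_ _ _ _).inv ≫ (τ.naturality f).hom ▷ i b ≫ (α_ _ _ _).hom ≫
        τ.app a ◁ ((leftAdjointTrans τ adj).naturality f).hom ≫ (α_ _ _ _).inv) ≫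
        (adj a).counit ▷ F.map f := by
  have := mateEquiv_comp_counit (adj a) (adj b) ((leftAdjointTrans τ adj).naturality f).hom
  rw [mateEquiv_leftAdjointTrans_naturality] at this
  rw [← cancel_mono (λ_ _).hom]
  simp only [leftAdjointTrans_app, Category.assoc, this]
  simp

def leftAdjointTransCounit :
    Oplax.OplaxTrans.Modification
      (Oplax.StrongTrans.toOplax (toOplax (τ ≫ leftAdjointTrans τ adj)))
      (Oplax.StrongTrans.toOplax (toOplax (𝟙 F))) where
  app x := (adj x).counit
  naturality f := leftAdjointTrans_counit_naturality τ adj f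

lemma leftAdjointTrans_inv_unit_naturality {a b : B₁} (f : a ⟶ b) :
    G.map f ◁ inv (adj b).unit ≫ (ρ_ _).hom ≫ (λ_ _).inv =
      ((α_ (G.map f) (i b) (τ.app b)).inv ≫ ((leftAdjointTrans τ adj).naturality f).hom ▷ τ.app b ≫
        (α_ (i a) (F.map f) (τ.app b)).hom ≫ i a ◁ (τ.naturality f).hom ≫ (α_ _ _ _).inv) ≫
        inv (adj a).unit ▷ G.map f := by
  have := unit_comp_mateEquiv (adj a) (adj b) ((leftAdjointTrans τ adj).naturality f).hom
  rw [mateEquiv_leftAdjointTrans_naturality] at this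
  rw [← cancel_epi (G.map f ◁ (adj b).unit), ← cancel_epi (ρ_ _).inv]
  simp only [leftAdjointTrans_app, Category.assoc, reassoc_of% this.symm]
  simp

noncomputable def leftAdjointTransUnitInv :
    Oplax.OplaxTrans.Modification
      (Oplax.StrongTrans.toOplax (toOplax (leftAdjointTrans τ adj ≫ τ)))
      (Oplax.StrongTrans.toOplax (toOplax (𝟙 G))) where
  app x := (inv (adj x).unit : i x ≫ τ.app x ⟶ 𝟙 _)
  naturality f := leftAdjointTrans_inv_unit_naturality τ adj f

end CategoryTheory.Pseudofunctor.StrongTrans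

/-- A strong natural transformation `τ : F ⟶ G` between pseudofunctors whose components
`τ.app x : F x ⟶ G x` are all equivalences (i.e. parts of adjoint equivalences) is an
equivalence in the bicategory of pseudofunctors: there is a strong natural transformation
`σ : G ⟶ F` together with invertible modifications (modifications all of whose component
2-cells are invertible) between `τ ≫ σ` and the identity transformation of `F`, and
between `σ ≫ τ` and the identity transformation of `G`. -/
theorem pseudofunctor_strongNatTrans_equivalence_of_pointwise_equivalence
    {B₁ B₂ : Type*} [Bicategory B₁] [Bicategory B₂]
    (F G : Pseudofunctor B₁ B₂) (τ : F ⟶ G)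
    (h : ∀ x : B₁, ∃ e : Bicategory.Equivalence (F.obj x) (G.obj x), e.hom = τ.app x) :
    ∃ σ : G ⟶ F,
      (∃ m : Oplax.OplaxTrans.Modification (Oplax.StrongTrans.toOplax (Pseudofunctor.StrongTrans.toOplax (τ ≫ σ)))
          (Oplax.StrongTrans.toOplax (Pseudofunctor.StrongTrans.toOplax (𝟙 F))), ∀ x : B₁, IsIso (m.app x)) ∧
      (∃ m : Oplax.OplaxTrans.Modification (Oplax.StrongTrans.toOplax (Pseudofunctor.StrongTrans.toOplax (σ ≫ τ)))
          (Oplax.StrongTrans.toOplax (Pseudofunctor.StrongTrans.toOplax (𝟙 G))), ∀ x : B₁, IsIso (m.app x)) := by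
  have hadj : ∀ x : B₁, ∃ (i : G.obj x ⟶ F.obj x) (adj : i ⊣ τ.app x),
      IsIso adj.unit ∧ IsIso adj.counit := by
    intro x
    obtain ⟨e, he⟩ := h x
    rw [← he]
    exact ⟨e.inv, e.adjunctionInvHom, inferInstanceAs (IsIso e.counit.inv),
      inferInstanceAs (IsIso e.unit.inv)⟩
  choose i adj _ _ using hadj
  exact ⟨Pseudofunctor.StrongTrans.leftAdjointTrans τ adj,
    ⟨Pseudofunctor.StrongTrans.leftAdjointTransCounit τ adj,
      fun x => inferInstanceAs (IsIso (adj x).counit)⟩,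
    ⟨Pseudofunctor.StrongTrans.leftAdjointTransUnitInv τ adj,
      fun x => inferInstanceAs (IsIso (inv (adj x).unit))⟩⟩
end
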